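/- arXiv:1112.0846 — 2 statements merged into one kernel-verified Lean document; each statement's English description precedes it below -/
import Mathlib

section
/- For the cycle C_n on n ≥ 3 vertices, d_oc(C_n, n) = 1, d_oc(C_n, n−1) = n, d_oc(C_n, n−2) = n, and d_oc(C_n, i) = 0 for every i < n−2. -/
/-!
Let `T` be the complement of an ocd-set `S` in a graph of maximum degree two. Every vertex of `T`
has a neighbour in `S`, hence at most one neighbour in `T`; since `T` induces a connected graph,
any two distinct vertices of `T` are adjacent. So `|T| ≤ 2`, and if `|T| = 2` then `T` is an edge.
Conversely, in a `2`-regular graph the complement of every vertex and of every edge is an ocd-set,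
so the ocd-sets of size `|V| - 2` correspond to the edges, of which there are `|V|`.
-/

/-- `S` is a dominating set of `G`: every vertex not in `S` is adjacent to a vertex of `S`. -/
def IsDomSet {V : Type*} (G : SimpleGraph V) (S : Finset V) : Prop :=
  ∀ v ∉ S, ∃ u ∈ S, G.Adj u v

/-- `S` is an outer-connected dominating set of `G`. -/
def IsOcdSet {V : Type*} [Fintype V] (G : SimpleGraph V) (S : Finset V) : Prop :=
  IsDomSet G S ∧ (S = Finset.univ ∨ (G.induce ((↑S : Set V)ᶜ)).Connected)

/-- `docNum G i` is the number of ocd-sets of `G` of cardinality `i`. -/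
noncomputable def docNum {V : Type*} [Fintype V] (G : SimpleGraph V) (i : ℕ) : ℕ :=
  Nat.card {S : Finset V // IsOcdSet G S ∧ S.card = i}

open Finset SimpleGraph

theorem SimpleGraph.Reachable.eq_or_adj_of_adj_unique {W : Type*} {H : SimpleGraph W}
    (hH : ∀ v a b, H.Adj v a → H.Adj v b → a = b) {x y : W} (hxy : H.Reachable x y) :
    x = y ∨ H.Adj x y := by
  obtain ⟨p⟩ := hxy
  induction p with
  | nil => exact Or.inl rfl
  | cons hxz _ ih =>
    rcases ih with rfl | hzy
    · exact Or.inr hxz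
    · exact Or.inl (hH _ _ _ hxz.symm hzy)

section

variable {V : Type*} [Fintype V] {G : SimpleGraph V} {S : Finset V}

open scoped Classical in
theorem docNum_eq_card_filter (G : SimpleGraph V) (i : ℕ) :
    docNum G i = #{S : Finset V | IsOcdSet G S ∧ #S = i} := by
  rw [docNum, Nat.card_eq_fintype_card, Fintype.card_subtype]

theorem docNum_card : docNum G (Fintype.card V) = 1 := by
  classical
  rw [docNum_eq_card_filter, card_eq_one]
  refine ⟨univ, ?_⟩
  ext S
  simp only [mem_filter, mem_univ, true_and, mem_singleton, card_eq_iff_eq_univ]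
  exact ⟨And.right, fun h => ⟨h ▸ ⟨fun v hv => absurd (mem_univ v) hv, Or.inl rfl⟩, h⟩⟩

variable [DecidableRel G.Adj]

theorem SimpleGraph.IsRegularOfDegree.card_edgeFinset_of_two (hG : G.IsRegularOfDegree 2) :
    #G.edgeFinset = Fintype.card V := by
  have := G.sum_degrees_eq_twice_card_edges
  simp only [hG.degree_eq, sum_const, card_univ, smul_eq_mul] at this
  omega

theorem IsDomSet.eq_of_adj_of_notMem (hdeg : ∀ v, G.degree v ≤ 2) (hS : IsDomSet G S) {v a b : V}
    (hv : v ∉ S) (hva : G.Adj v a) (hvb : G.Adj v b) (ha : a ∉ S) (hb : b ∉ S) : a = b := by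
  classical
  obtain ⟨u, huS, huv⟩ := hS v hv
  by_contra hab
  have hsub : ({u, a, b} : Finset V) ⊆ G.neighborFinset v := by
    simp [insert_subset_iff, huv.symm, hva, hvb]
  have hcard : #({u, a, b} : Finset V) = 3 :=
    card_eq_three.mpr ⟨u, a, b, ne_of_mem_of_not_mem huS ha, ne_of_mem_of_not_mem huS hb, hab, rfl⟩
  have := card_le_card hsub
  rw [hcard, card_neighborFinset_eq_degree] at this
  exact absurd (hdeg v) (by omega)

theorem IsOcdSet.adj_of_notMem (hdeg : ∀ v, G.degree v ≤ 2) (hS : IsOcdSet G S) {a b : V}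
    (ha : a ∉ S) (hb : b ∉ S) (hab : a ≠ b) : G.Adj a b := by
  obtain ⟨hdom, rfl | hconn⟩ := hS
  · exact absurd (mem_univ a) ha
  have hunique : ∀ v x y : ((S : Set V)ᶜ : Set V),
      (G.induce _).Adj v x → (G.induce _).Adj v y → x = y := fun v x y hvx hvy =>
    Subtype.ext (hdom.eq_of_adj_of_notMem hdeg v.2 hvx hvy x.2 y.2)
  obtain h | h := (hconn.preconnected ⟨a, ha⟩ ⟨b, hb⟩).eq_or_adj_of_adj_unique hunique
  · exact absurd (congrArg Subtype.val h) hab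
  · exact h

theorem IsOcdSet.card_sub_two_le (hdeg : ∀ v, G.degree v ≤ 2) (hS : IsOcdSet G S) :
    Fintype.card V - 2 ≤ #S := by
  classical
  suffices #Sᶜ ≤ 2 by rw [card_compl] at this; omega
  by_contra! h
  obtain ⟨a, b, c, ha, hb, hc, hab, hac, hbc⟩ := two_lt_card_iff.mp h
  rw [mem_compl] at ha hb hc
  exact hbc (hS.1.eq_of_adj_of_notMem hdeg ha (hS.adj_of_notMem hdeg ha hb hab)
    (hS.adj_of_notMem hdeg ha hc hac) hb hc)

theorem docNum_eq_zero_of_lt (hdeg : ∀ v, G.degree v ≤ 2) {i : ℕ} (hi : i < Fintype.card V - 2) :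
    docNum G i = 0 := by
  classical
  rw [docNum_eq_card_filter, card_eq_zero, filter_eq_empty_iff]
  rintro S - ⟨hS, rfl⟩
  exact absurd (hS.card_sub_two_le hdeg) (by omega)

section

variable [DecidableEq V]

theorem isDomSet_compl_of_card_le_degree {T : Finset V} (hT : ∀ v ∈ T, #T ≤ G.degree v) :
    IsDomSet G Tᶜ := by
  intro v hv
  rw [notMem_compl] at hv
  by_contra! hnone
  have hsub : G.neighborFinset v ⊆ T.erase v := fun u hu => by
    rw [mem_neighborFinset] at hu
    refine mem_erase.mpr ⟨hu.ne', ?_⟩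
    by_contra huT
    exact hnone u (mem_compl.mpr huT) hu.symm
  -- `v` is not its own neighbour, so it has fewer than `#T` neighbours inside `T`
  have := card_le_card hsub
  rw [card_neighborFinset_eq_degree, card_erase_of_mem hv] at this
  have := hT v hv
  have := card_pos.mpr ⟨v, hv⟩
  omega

theorem isOcdSet_compl_singleton (hdeg : ∀ v, 1 ≤ G.degree v) (v : V) :
    IsOcdSet G {v}ᶜ := by
  refine ⟨isDomSet_compl_of_card_le_degree (by simpa using hdeg v), Or.inr ?_⟩
  rw [coe_compl, compl_compl, coe_singleton]
  have : Nonempty ({v} : Set V) := ⟨⟨v, rfl⟩⟩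
  exact connected_iff _ |>.mpr ⟨Preconnected.of_subsingleton, inferInstance⟩

theorem isOcdSet_compl_pair_iff (hG : G.IsRegularOfDegree 2) {a b : V} (hab : a ≠ b) :
    IsOcdSet G {a, b}ᶜ ↔ G.Adj a b := by
  refine ⟨fun hS => hS.adj_of_notMem (fun v => (hG v).le) (by simp) (by simp) hab,
    fun hadj => ⟨isDomSet_compl_of_card_le_degree fun v _ => ?_, Or.inr ?_⟩⟩
  · rw [card_pair hab, hG v]
  · rw [coe_compl, compl_compl, coe_pair]
    exact induce_pair_connected_of_adj hadj

end

theorem docNum_card_sub_one [Nonempty V] (hdeg : ∀ v, 1 ≤ G.degree v) :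
    docNum G (Fintype.card V - 1) = Fintype.card V := by
  classical
  have hall (S : Finset V) (hS : #S = Fintype.card V - 1) : IsOcdSet G S := by
    have : #Sᶜ = 1 := by rw [card_compl, hS]; have := Fintype.card_pos (α := V); omega
    obtain ⟨v, hv⟩ := card_eq_one.mp this
    simpa [← hv] using isOcdSet_compl_singleton hdeg v
  calc docNum G (Fintype.card V - 1)
      = #(powersetCard (Fintype.card V - 1) (univ : Finset V)) := by
        rw [docNum_eq_card_filter]
        congr 1
        ext S
        simpa [mem_powersetCard] using hall S
    _ = Fintype.card V := by
        rw [card_powersetCard, card_univ, Nat.choose_symm Fintype.card_pos, Nat.choose_one_right]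

theorem docNum_card_sub_two [Nonempty V] (hG : G.IsRegularOfDegree 2) :
    docNum G (Fintype.card V - 2) = #G.edgeFinset := by
  classical
  have hV : 2 < Fintype.card V := hG.degree_eq (Classical.arbitrary V) ▸ G.degree_lt_card_verts _
  have hinj : Function.Injective fun e : Sym2 V => e.toFinsetᶜ := fun e e' h =>
    Sym2.ext fun x => by simpa using congrArg (x ∈ ·) (compl_injective h)
  rw [docNum_eq_card_filter, ← card_image_of_injective _ hinj]
  congr 1
  ext S
  simp only [mem_filter, mem_univ, true_and, mem_image, mem_edgeFinset]
  constructor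
  · rintro ⟨hS, hcard⟩
    obtain ⟨a, b, hab, hSab⟩ := card_eq_two.mp (show #Sᶜ = 2 by rw [card_compl, hcard]; omega)
    rw [← compl_compl S, hSab] at hS ⊢
    exact ⟨s(a, b), (isOcdSet_compl_pair_iff hG hab).mp hS, by rw [Sym2.toFinset_mk_eq]⟩
  · rintro ⟨e, he, rfl⟩
    induction e using Sym2.ind with
    | h a b =>
      rw [Sym2.toFinset_mk_eq]
      exact ⟨(isOcdSet_compl_pair_iff hG he.ne).mpr he, by rw [card_compl, card_pair he.ne]⟩

end

/-- for the cycle `C_n` with `n ≥ 3`: `d_oc(C_n, n) = 1`,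
`d_oc(C_n, n-1) = n`, `d_oc(C_n, n-2) = n`, and `d_oc(C_n, i) = 0` for `i < n - 2`. -/
theorem stmt_7 (n : ℕ) (hn : 3 ≤ n) :
    docNum (SimpleGraph.cycleGraph n) n = 1 ∧
    docNum (SimpleGraph.cycleGraph n) (n - 1) = n ∧
    docNum (SimpleGraph.cycleGraph n) (n - 2) = n ∧
    (∀ i : ℕ, i < n - 2 → docNum (SimpleGraph.cycleGraph n) i = 0) := by
  obtain ⟨m, rfl⟩ : ∃ m, n = m + 3 := ⟨n - 3, by omega⟩
  have hreg : (cycleGraph (m + 3)).IsRegularOfDegree 2 := fun _ => cycleGraph_degree_three_le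
  have hdeg_pos (v : Fin (m + 3)) : 1 ≤ (cycleGraph (m + 3)).degree v := by rw [hreg v]; omega
  refine ⟨?_, ?_, ?_, fun i hi => ?_⟩
  · simpa using docNum_card (G := cycleGraph (m + 3))
  · simpa using docNum_card_sub_one hdeg_pos
  · simpa [hreg.card_edgeFinset_of_two] using docNum_card_sub_two hreg
  · exact docNum_eq_zero_of_lt (fun v => (hreg v).le) (by simpa using hi)
end

section
/- Let G be the disjoint union of two finite simple graphs G_1 and G_2 on n_1 ≥ 1 and n_2 ≥ 1 vertices respectively. Then the ocd polynomial satisfies D_oc(G, x) = x^{n_2}·D_oc(G_1, x) + x^{n_1}·D_oc(G_2, x) − x^{n_1+n_2}, where D_oc(H,x) = Σ_i d_oc(H,i) x^i. -/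
/-- The ocd polynomial of `G`: `D_oc(G,x) = Σ_i d_oc(G,i) xⁱ` (as a polynomial over `ℤ`). -/
noncomputable def ocdPoly {V : Type*} [Fintype V] (G : SimpleGraph V) : Polynomial ℤ :=
  ∑ i ∈ Finset.range (Fintype.card V + 1), Polynomial.C (docNum G i : ℤ) * Polynomial.X ^ i

/-! An ocd-set of `G₁ ⊕g G₂` other than the whole vertex set has a connected complement, and a
connected subgraph of a disjoint union lies in one of the two parts. So the ocd-sets of `G₁ ⊕g G₂`
are `S₁ ∪ V₂` for ocd-sets `S₁` of `G₁`, and `V₁ ∪ S₂` for ocd-sets `S₂` of `G₂`; the two families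
share only `V₁ ∪ V₂`, which is where the correction `-x^(n₁+n₂)` comes from. -/

open Finset Polynomial

namespace SimpleGraph

variable {V W : Type*} {G : SimpleGraph V} {H : SimpleGraph W}

def Iso.sumEmpty [IsEmpty W] : G ⊕g H ≃g G where
  toEquiv := Equiv.sumEmpty V W
  map_rel_iff' {u v} := by
    rcases u with u | w
    · rcases v with v | w
      · simp
      · exact isEmptyElim w
    · exact isEmptyElim w

def Iso.emptySum [IsEmpty V] : G ⊕g H ≃g H :=
  Iso.sumComm.trans Iso.sumEmpty

theorem connected_sum_iff :
    (G ⊕g H).Connected ↔ G.Connected ∧ IsEmpty W ∨ IsEmpty V ∧ H.Connected := by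
  constructor
  · intro h
    rcases isEmpty_or_nonempty W with hW | hW
    · exact .inl ⟨Iso.sumEmpty.connected_iff.1 h, hW⟩
    rcases isEmpty_or_nonempty V with hV | hV
    · exact .inr ⟨hV, Iso.emptySum.connected_iff.1 h⟩
    · exact absurd h not_connected_sum
  · rintro (⟨h, hW⟩ | ⟨hV, h⟩)
    · exact Iso.sumEmpty.connected_iff.2 h
    · exact Iso.emptySum.connected_iff.2 h

def Iso.induceSum (s : Set (V ⊕ W)) :
    (G ⊕g H).induce s ≃g G.induce (Sum.inl ⁻¹' s) ⊕g H.induce (Sum.inr ⁻¹' s) where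
  toEquiv := Equiv.subtypeSum
  map_rel_iff' {u v} := by
    rcases u with ⟨u | u, hu⟩ <;> rcases v with ⟨v | v, hv⟩ <;> simp [Equiv.subtypeSum]

end SimpleGraph

section
variable {α β R : Type*} [DecidableEq α] [DecidableEq β] [CommSemiring R]

theorem sum_pow_card_image_disjSum_univ [Fintype β] (s : Finset (Finset α)) (x : R) :
    ∑ S ∈ s.image (·.disjSum (univ : Finset β)), x ^ #S =
      x ^ Fintype.card β * ∑ A ∈ s, x ^ #A := by
  rw [sum_image fun _ _ _ _ h => (disjSum_inj.1 h).1, mul_sum]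
  simp [card_disjSum, pow_add, mul_comm]

theorem sum_pow_card_image_univ_disjSum [Fintype α] (s : Finset (Finset β)) (x : R) :
    ∑ S ∈ s.image ((univ : Finset α).disjSum ·), x ^ #S =
      x ^ Fintype.card α * ∑ B ∈ s, x ^ #B := by
  rw [sum_image fun _ _ _ _ h => (disjSum_inj.1 h).2, mul_sum]
  simp [card_disjSum, pow_add]

end

theorem isDomSet_univ {V : Type*} [Fintype V] (G : SimpleGraph V) : IsDomSet G univ :=
  fun v hv => absurd (mem_univ v) hv

theorem isOcdSet_univ {V : Type*} [Fintype V] (G : SimpleGraph V) : IsOcdSet G univ :=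
  ⟨isDomSet_univ G, .inl rfl⟩

theorem ocdPoly_eq_sum {V : Type*} [Fintype V] (G : SimpleGraph V)
    [DecidablePred (IsOcdSet G)] :
    ocdPoly G = ∑ S with IsOcdSet G S, X ^ #S := by
  rw [ocdPoly, ← sum_fiberwise_of_maps_to (g := card) (t := range (Fintype.card V + 1))
    fun S _ => mem_range.2 (Nat.lt_succ_of_le (card_le_univ S))]
  refine sum_congr rfl fun i _ => ?_
  rw [sum_congr rfl fun S hS => by rw [(mem_filter.1 hS).2], sum_const, filter_filter, docNum,
    Nat.card_eq_fintype_card, Fintype.card_subtype, nsmul_eq_mul, C_eq_natCast]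

section DisjointUnion

variable {V₁ V₂ : Type*} {G₁ : SimpleGraph V₁} {G₂ : SimpleGraph V₂}

theorem isDomSet_disjSum_iff {A : Finset V₁} {B : Finset V₂} :
    IsDomSet (G₁ ⊕g G₂) (A.disjSum B) ↔ IsDomSet G₁ A ∧ IsDomSet G₂ B := by
  simp [IsDomSet, Sum.forall, Sum.exists]

variable [Fintype V₁] [Fintype V₂]

theorem connected_induce_compl_disjSum_iff {A : Finset V₁} {B : Finset V₂} :
    ((G₁ ⊕g G₂).induce (↑(A.disjSum B))ᶜ).Connected ↔
      (G₁.induce (↑A)ᶜ).Connected ∧ B = univ ∨ A = univ ∧ (G₂.induce (↑B)ᶜ).Connected := by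
  have hl : Sum.inl ⁻¹' (↑(A.disjSum B) : Set (V₁ ⊕ V₂))ᶜ = (↑A)ᶜ := by ext; simp
  have hr : Sum.inr ⁻¹' (↑(A.disjSum B) : Set (V₁ ⊕ V₂))ᶜ = (↑B)ᶜ := by ext; simp
  rw [(SimpleGraph.Iso.induceSum _).connected_iff, SimpleGraph.connected_sum_iff, hl, hr]
  simp only [Set.isEmpty_coe_sort, Set.compl_empty_iff, coe_eq_univ]

theorem isOcdSet_disjSum_iff {A : Finset V₁} {B : Finset V₂} :
    IsOcdSet (G₁ ⊕g G₂) (A.disjSum B) ↔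
      IsOcdSet G₁ A ∧ B = univ ∨ A = univ ∧ IsOcdSet G₂ B := by
  simp only [IsOcdSet, isDomSet_disjSum_iff, connected_induce_compl_disjSum_iff,
    ← univ_disjSum_univ, disjSum_inj]
  grind [isDomSet_univ]

variable [DecidableEq V₁] [DecidableEq V₂]

open scoped Classical in
theorem filter_isOcdSet_sum_eq_union :
    ({S | IsOcdSet (G₁ ⊕g G₂) S} : Finset _) =
      ({A | IsOcdSet G₁ A} : Finset _).image (·.disjSum univ) ∪
        ({B | IsOcdSet G₂ B} : Finset _).image (univ.disjSum ·) := by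
  ext S
  obtain ⟨⟨A, B⟩, rfl⟩ := Finset.sumEquiv.symm.surjective S
  simp only [mem_filter, mem_univ, true_and, mem_union, mem_image, sumEquiv_symm_apply,
    isOcdSet_disjSum_iff, disjSum_inj]
  grind

open scoped Classical in
theorem image_filter_isOcdSet_inter_eq_singleton_univ :
    ({A | IsOcdSet G₁ A} : Finset _).image (·.disjSum univ) ∩
        ({B | IsOcdSet G₂ B} : Finset _).image (univ.disjSum ·) = {univ} := by
  ext S
  obtain ⟨⟨A, B⟩, rfl⟩ := Finset.sumEquiv.symm.surjective S
  simp only [mem_inter, mem_image, mem_filter, mem_univ, true_and, mem_singleton,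
    sumEquiv_symm_apply, disjSum_inj, ← univ_disjSum_univ]
  grind [isOcdSet_univ]

end DisjointUnion

open Polynomial in
theorem stmt_11_general {V₁ V₂ : Type*} [Fintype V₁] [Fintype V₂]
    (G₁ : SimpleGraph V₁) (G₂ : SimpleGraph V₂) :
    ocdPoly (G₁ ⊕g G₂) =
      X ^ (Fintype.card V₂) * ocdPoly G₁ + X ^ (Fintype.card V₁) * ocdPoly G₂ -
        X ^ (Fintype.card V₁ + Fintype.card V₂) := by
  classical
  rw [ocdPoly_eq_sum, ocdPoly_eq_sum, ocdPoly_eq_sum, filter_isOcdSet_sum_eq_union,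
    eq_sub_iff_add_eq, ← sum_pow_card_image_disjSum_univ, ← sum_pow_card_image_univ_disjSum,
    ← sum_union_inter, image_filter_isOcdSet_inter_eq_singleton_univ, sum_singleton, card_univ,
    Fintype.card_sum]

open Polynomial in
/-- for the disjoint union `G = G₁ ∪ G₂`,
`D_oc(G,x) = x^{n₂} D_oc(G₁,x) + x^{n₁} D_oc(G₂,x) − x^{n₁+n₂}`. -/
theorem stmt_11 {V₁ V₂ : Type*} [Fintype V₁] [Fintype V₂]
    (G₁ : SimpleGraph V₁) (G₂ : SimpleGraph V₂)
    (h₁ : 1 ≤ Fintype.card V₁) (h₂ : 1 ≤ Fintype.card V₂) :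
    ocdPoly (G₁ ⊕g G₂) =
      X ^ (Fintype.card V₂) * ocdPoly G₁ + X ^ (Fintype.card V₁) * ocdPoly G₂ -
        X ^ (Fintype.card V₁ + Fintype.card V₂) :=
  stmt_11_general G₁ G₂
end
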